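/- Let $a_1,\dots,a_n$ be integers such that some $a_j \in \{1,-1,2,-2\}$, and let $b_i = \sigma_i(a_1^2,\dots,a_n^2)$ for $1 \le i \le n$. Then the greatest common divisor of $b_1,\dots,b_n$ is a power of $2$. -/
import Mathlib


/-- If some `a j ∈ {1, -1, 2, -2}` and
`b i = σ_i(a₁², …, aₙ²)` for `1 ≤ i ≤ n`, then the greatest common divisor
of `b 1, …, b n` is a power of `2`. -/
theorem stmt2 (n : ℕ) (a : Fin n → ℤ)
    (ha : ∃ j, a j = 1 ∨ a j = -1 ∨ a j = 2 ∨ a j = -2)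
    (b : ℕ → ℤ)
    (hb : ∀ i, (Finset.univ.val.map (fun j => (a j) ^ 2)).esymm i = b i) :
    ∃ k : ℕ, (Finset.Icc 1 n).gcd b = 2 ^ k := by
  classical
  obtain ⟨j, hj⟩ := ha
  set s : Multiset ℤ := Finset.univ.val.map (fun j => (a j) ^ 2) with hs
  have hcard : Multiset.card s = n := by simp [hs]
  set g := (Finset.Icc 1 n).gcd b with hg
  set c : ℤ := -((a j) ^ 2) with hc
  have h0 : (0:ℤ) = ∑ i ∈ Finset.range (n+1), s.esymm i * c ^ (n - i) := by
    have h1 := Multiset.prod_X_add_C_eq_sum_esymm s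
    have h2 := congrArg (Polynomial.eval c) h1
    rw [Polynomial.eval_multiset_prod] at h2
    simp only [Polynomial.eval_finset_sum, Polynomial.eval_mul, Polynomial.eval_C,
      Polynomial.eval_pow, Polynomial.eval_X, hcard, Multiset.map_map, Function.comp,
      Polynomial.eval_add] at h2
    rw [← h2]
    refine (Multiset.prod_eq_zero ?_).symm
    have hmem : (a j) ^ 2 ∈ s := by
      rw [hs]
      exact Multiset.mem_map_of_mem _ (Finset.mem_univ_val j)
    have : c + (a j) ^ 2 = 0 := by rw [hc]; ring
    rw [← this]
    exact Multiset.mem_map_of_mem _ hmem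
  rw [Finset.sum_range_succ'] at h0
  have hes0 : s.esymm 0 = 1 := by simp [Multiset.esymm]
  have hcn : c ^ n = -∑ i ∈ Finset.range n, s.esymm (i+1) * c ^ (n - (i+1)) := by
    have h3 : s.esymm 0 * c ^ (n - 0) = c ^ n := by rw [hes0, Nat.sub_zero, one_mul]
    rw [h3] at h0
    linarith [h0]
  have hgdvd : g ∣ c ^ n := by
    rw [hcn]
    refine dvd_neg.mpr (Finset.dvd_sum ?_)
    intro i hi
    have hib : g ∣ b (i+1) := by
      apply Finset.gcd_dvd
      simp only [Finset.mem_Icc]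
      exact ⟨Nat.succ_le_succ (Nat.zero_le i), Finset.mem_range.mp hi⟩
    rw [← hb (i+1)] at hib
    exact Dvd.dvd.mul_right hib _
  have hcdvd : c ∣ 4 := by
    rcases hj with h | h | h | h <;> rw [hc, h] <;> norm_num
  have hdvd4 : g ∣ (2:ℤ) ^ (2*n) := by
    calc g ∣ c ^ n := hgdvd
    _ ∣ (4:ℤ) ^ n := pow_dvd_pow_of_dvd hcdvd n
    _ = (2:ℤ) ^ (2*n) := by rw [pow_mul]; norm_num
  have hnonneg : 0 ≤ g := Int.nonneg_of_normalize_eq_self (Finset.normalize_gcd)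
  have hnat : g.natAbs ∣ 2 ^ (2*n) := by
    have h4 := Int.natAbs_dvd_natAbs.mpr hdvd4
    simpa [Int.natAbs_pow] using h4
  obtain ⟨k, _, hk⟩ := (Nat.dvd_prime_pow Nat.prime_two).mp hnat
  exact ⟨k, by rw [← Int.natAbs_of_nonneg hnonneg, hk]; push_cast; ring⟩
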